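/- arXiv:1101.1993 — 2 statements merged into one kernel-verified Lean document; each statement's English description precedes it below -/
import Mathlib

section
/- Let (G̃, G) be a ℤ/2-pair. Then for any vertices x, y of G̃, the graph distance in G̃ satisfies d_{G̃}(x, y) = min{ ℓ(p) : p is an (x,y)-admissible path in G }, where ℓ(p) denotes the length of p. -/
/-- A multigraph: a set of vertices `V`, a set of edges `E`, and two endpoint maps.
The pair `(src e, tgt e)` records an (arbitrary) orientation of the unoriented edge `e`;
graphs are regarded as unoriented. -/
structure Multigraph (V E : Type) where
  src : E → V
  tgt : E → V

namespace Multigraph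

variable {V E : Type}

/-- The edge `e` is an edge between `u` and `v` (in either direction). -/
def EndsAt (G : Multigraph V E) (e : E) (u v : V) : Prop :=
  (G.src e = u ∧ G.tgt e = v) ∨ (G.src e = v ∧ G.tgt e = u)

/-- A path (walk) in a multigraph from `u` to `v`: a sequence
`(v₀, e₁, v₁, …, e_n, v_n)` where each `e_i` is an edge between `v_{i-1}` and `v_i`. -/
inductive Walk (G : Multigraph V E) : V → V → Type
  | nil (v : V) : Walk G v v
  | cons {u v w : V} (e : E) (h : G.EndsAt e u v) (p : Walk G v w) : Walk G u w

namespace Walk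

variable {G : Multigraph V E}

/-- The length of a path. -/
def length : ∀ {u v : V}, G.Walk u v → ℕ
  | _, _, .nil _ => 0
  | _, _, .cons _ _ p => length p + 1

/-- The list of edges of a path. -/
def edges : ∀ {u v : V}, G.Walk u v → List E
  | _, _, .nil _ => []
  | _, _, .cons e _ p => e :: edges p

/-- The list of vertices of a path (including the first one). -/
def verts : ∀ {u v : V}, G.Walk u v → List V
  | _, _, .nil v => [v]
  | u, _, .cons _ _ p => u :: verts p

/-- A path has a backtrack if for some `i` it traverses the same edge at steps
`i+1` and `i+2` returning to the same vertex, i.e. `v_i = v_{i+2}` and `e_{i+1} = e_{i+2}`. -/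
def HasBacktrack {u v : V} (p : G.Walk u v) : Prop :=
  ∃ i : ℕ, i + 1 < p.edges.length ∧ p.edges[i]? = p.edges[i + 1]? ∧
    p.verts[i]? = p.verts[i + 2]?

end Walk

/-- A multigraph is connected if any two vertices are joined by a path. -/
def Connected (G : Multigraph V E) : Prop := ∀ u v : V, Nonempty (G.Walk u v)

/-- `u` and `v` can be joined by a path avoiding all edges in `F`. -/
def ReachAvoid (G : Multigraph V E) (F : Set E) (u v : V) : Prop :=
  ∃ p : G.Walk u v, ∀ e ∈ p.edges, e ∉ F

/-- A set of edges `w` is a wall (a cut) if removing these edges from the graph separates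
it into exactly two connected components (the associated half-spaces `A` and `B`). -/
def IsWall (G : Multigraph V E) (w : Set E) : Prop :=
  ∃ A B : Set V, A.Nonempty ∧ B.Nonempty ∧ Disjoint A B ∧ A ∪ B = Set.univ ∧
    ∀ u v : V, G.ReachAvoid w u v ↔ ((u ∈ A ∧ v ∈ A) ∨ (u ∈ B ∧ v ∈ B))

/-- A wall structure: a set of walls such that every edge belongs to exactly one wall. -/
def IsWallStructure (G : Multigraph V E) (W : Set (Set E)) : Prop :=
  (∀ w ∈ W, G.IsWall w) ∧ ∀ e : E, ∃! w, w ∈ W ∧ e ∈ w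

/-- The set of edges `w` separates `u` from `v` if after removing `w` there is
no path from `u` to `v` (i.e. they lie in different half-spaces). -/
def Separates (G : Multigraph V E) (w : Set E) (u v : V) : Prop :=
  ¬ G.ReachAvoid w u v

/-- The wall pseudometric associated with a wall structure `W`:
the number of walls of `W` separating `x` from `y`. -/
noncomputable def wallDistOf (G : Multigraph V E) (W : Set (Set E)) (x y : V) : ℕ :=
  {w : Set E | w ∈ W ∧ G.Separates w x y}.ncard

/-- The graph metric: the length of a shortest path between two vertices. -/
noncomputable def graphDist (G : Multigraph V E) (u v : V) : ℕ :=
  sInf {n : ℕ | ∃ p : G.Walk u v, p.length = n}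

/-- A simple loop: a closed path of positive length with no repeated edges and no
repeated vertices (except that the first and last vertex coincide). -/
def IsSimpleLoop (G : Multigraph V E) {v : V} (p : G.Walk v v) : Prop :=
  0 < p.length ∧ p.edges.Nodup ∧ p.verts.dropLast.Nodup

/-- The girth of a multigraph: the length of a shortest simple loop. -/
noncomputable def girth (G : Multigraph V E) : ℕ :=
  sInf {n : ℕ | ∃ (v : V) (p : G.Walk v v), G.IsSimpleLoop p ∧ p.length = n}

end Multigraph

namespace Multigraph

variable {V E : Type}

/-- A graph is 2-connected if removing any single edge does not disconnect it
(equivalently, every edge lies on a simple loop). -/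
def TwoConnected (G : Multigraph V E) : Prop :=
  G.Connected ∧ ∀ (e : E) (u v : V), G.ReachAvoid {e} u v

/-- `T` is (the edge set of) a spanning tree of the finite graph `G`: the edges of `T`
connect all vertices of `G` and `|T| = |V(G)| - 1` (so the subgraph on `T` is a tree). -/
def IsSpanningTree [Fintype V] (G : Multigraph V E) (T : Finset E) : Prop :=
  (∀ u v : V, ∃ p : G.Walk u v, ∀ e ∈ p.edges, e ∈ T) ∧ T.card + 1 = Fintype.card V

variable [Fintype E] [DecidableEq E]

/-- Given a spanning tree `T` with `S = E \ T = Tᶜ`, crossing the edge `e` changes the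
second coordinate `τ ⊆ S` of a vertex of the `ℤ/2`-homology cover to `τ △ {e}` if `e ∈ S`,
and leaves it unchanged if `e ∈ T`. -/
def tauStep (T : Finset E) (e : E) (τ : {τ : Finset E // τ ⊆ Tᶜ}) :
    {τ : Finset E // τ ⊆ Tᶜ} :=
  if he : e ∈ Tᶜ then
    ⟨symmDiff τ.1 {e}, fun x hx => by
      rcases Finset.mem_symmDiff.mp hx with ⟨h1, _⟩ | ⟨h1, _⟩
      · exact τ.2 h1
      · rwa [Finset.mem_singleton.mp h1]⟩
  else τ

/-- The `ℤ/2`-homology cover of `G` associated with the spanning tree `T` (with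
`S = Tᶜ`): vertices are `V × 𝒫(S)`, edges are `E × 𝒫(S)`, where the edge `(e, τ)`
joins `(x, τ)` to `(y, τ)` if `e ∉ S`, and `(x, τ)` to `(y, τ △ {e})` if `e ∈ S`
with the orientation `x → y`. -/
def cover (G : Multigraph V E) (T : Finset E) :
    Multigraph (V × {τ : Finset E // τ ⊆ Tᶜ}) (E × {τ : Finset E // τ ⊆ Tᶜ}) where
  src p := (G.src p.1, p.2)
  tgt p := (G.tgt p.1, tauStep T p.1 p.2)

/-- The covering projection maps paths in the cover to paths in the base graph,
forgetting the second coordinates. -/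
def projWalk {G : Multigraph V E} {T : Finset E} :
    ∀ {x y : V × {τ : Finset E // τ ⊆ Tᶜ}}, (cover G T).Walk x y → G.Walk x.1 y.1
  | _, _, .nil v => .nil v.1
  | _, _, .cons e h p =>
      .cons e.1
        (by
          rcases h with ⟨h1, h2⟩ | ⟨h1, h2⟩
          · exact Or.inl ⟨congrArg Prod.fst h1, congrArg Prod.fst h2⟩
          · exact Or.inr ⟨congrArg Prod.fst h1, congrArg Prod.fst h2⟩)
        (projWalk p)

/-- A path `p` in `G` from `x₀` to `y₀` is `(x,y)`-admissible (for vertices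
`x = (x₀, τ_x)`, `y = (y₀, τ_y)` of the cover) if for every `e ∈ S = Tᶜ`, the number
of occurrences of `e` among the edges of `p` is odd when `e ∈ τ_x △ τ_y` and even
otherwise. -/
def Admissible (G : Multigraph V E) (T : Finset E)
    (x y : V × {τ : Finset E // τ ⊆ Tᶜ}) (p : G.Walk x.1 y.1) : Prop :=
  ∀ e ∈ (Tᶜ : Finset E),
    p.edges.count e % 2 = if e ∈ symmDiff x.2.1 y.2.1 then 1 else 0

/-- The wall `w_e = π⁻¹(e)` of the `ℤ/2`-homology cover associated to an edge `e` of
the base graph. -/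
def wallOf (G : Multigraph V E) (T : Finset E) (e : E) :
    Set (E × {τ : Finset E // τ ⊆ Tᶜ}) := {f | f.1 = e}

/-- The wall metric on the `ℤ/2`-homology cover: the number of walls
`w_e = π⁻¹(e)`, `e ∈ E(G)`, separating `x` from `y`. -/
noncomputable def wallDist (G : Multigraph V E) (T : Finset E)
    (x y : V × {τ : Finset E // τ ⊆ Tᶜ}) : ℕ :=
  {e : E | (cover G T).Separates (wallOf G T e) x y}.ncard

end Multigraph

/-!
A walk in the cover projects to a walk in `G` of the same length, and conversely every walk
in `G` from `x₀` lifts, from any starting sheet `τ`, to a walk in the cover of the same length.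
The sheet reached by the lift is `τ` with the membership of each `e ∈ S` flipped once for each
traversal of `e`, so the lift of a walk ending at `y₀` ends at `y` exactly when the walk is
`(x, y)`-admissible. Hence both sides are infima of the same set of lengths.
-/

namespace Multigraph

variable {V E : Type} [Fintype E] [DecidableEq E] {G : Multigraph V E} {T : Finset E}

theorem tauStep_tauStep (e : E) (τ : {τ : Finset E // τ ⊆ Tᶜ}) :
    tauStep T e (tauStep T e τ) = τ := by
  unfold tauStep
  split_ifs with he
  · ext1
    simp
  · rfl

theorem mem_tauStep {e f : E} (he : e ∈ Tᶜ) (τ : {τ : Finset E // τ ⊆ Tᶜ}) :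
    e ∈ (tauStep T f τ).1 ↔ (e ∈ τ.1 ↔ f ≠ e) := by
  unfold tauStep
  split_ifs with hf
  · by_cases hfe : f = e
    · subst hfe
      simp [Finset.mem_symmDiff]
    · simp [Finset.mem_symmDiff, Ne.symm hfe, hfe]
  · have hfe : f ≠ e := by rintro rfl; exact hf he
    simp [hfe]

theorem cover_endsAt_snd {f : E × {τ : Finset E // τ ⊆ Tᶜ}}
    {a b : V × {τ : Finset E // τ ⊆ Tᶜ}} (h : (cover G T).EndsAt f a b) :
    b.2 = tauStep T f.1 a.2 := by
  rcases h with ⟨rfl, rfl⟩ | ⟨rfl, rfl⟩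
  · rfl
  · exact (tauStep_tauStep _ _).symm

theorem exists_cover_endsAt {e : E} {u v : V} (h : G.EndsAt e u v)
    (τ : {τ : Finset E // τ ⊆ Tᶜ}) :
    ∃ σ, (cover G T).EndsAt (e, σ) (u, τ) (v, tauStep T e τ) := by
  rcases h with ⟨rfl, rfl⟩ | ⟨rfl, rfl⟩
  · exact ⟨τ, Or.inl ⟨rfl, rfl⟩⟩
  · exact ⟨tauStep T e τ, Or.inr ⟨rfl, by simp [cover, tauStep_tauStep]⟩⟩

/-- The sheet on which the lift of `p` starting on sheet `τ` ends. -/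
def liftTau : ∀ {u v : V}, G.Walk u v → {τ : Finset E // τ ⊆ Tᶜ} → {τ : Finset E // τ ⊆ Tᶜ}
  | _, _, .nil _, τ => τ
  | _, _, .cons e _ p, τ => liftTau p (tauStep T e τ)

noncomputable def liftWalk : ∀ {u v : V} (p : G.Walk u v) (τ : {τ : Finset E // τ ⊆ Tᶜ}),
    (cover G T).Walk (u, τ) (v, liftTau p τ)
  | _, _, .nil v, τ => .nil (v, τ)
  | _, _, .cons e h p, τ =>
    .cons (e, (exists_cover_endsAt h τ).choose) (exists_cover_endsAt h τ).choose_spec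
      (liftWalk p (tauStep T e τ))

theorem length_liftWalk : ∀ {u v : V} (p : G.Walk u v) (τ : {τ : Finset E // τ ⊆ Tᶜ}),
    (liftWalk p τ).length = p.length
  | _, _, .nil _, _ => rfl
  | _, _, .cons e _ p, τ => congrArg (· + 1) (length_liftWalk p (tauStep T e τ))

theorem length_projWalk : ∀ {a b : V × {τ : Finset E // τ ⊆ Tᶜ}}
    (q : (cover G T).Walk a b), (projWalk q).length = q.length
  | _, _, .nil _ => rfl
  | _, _, .cons _ _ q => congrArg (· + 1) (length_projWalk q)

theorem liftTau_projWalk : ∀ {a b : V × {τ : Finset E // τ ⊆ Tᶜ}}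
    (q : (cover G T).Walk a b), liftTau (projWalk q) a.2 = b.2
  | _, _, .nil _ => rfl
  | _, _, .cons _ h q => by
    rw [← liftTau_projWalk q, cover_endsAt_snd h]
    rfl

theorem mem_liftTau {e : E} (he : e ∈ Tᶜ) : ∀ {u v : V} (p : G.Walk u v)
    (τ : {τ : Finset E // τ ⊆ Tᶜ}), e ∈ (liftTau p τ).1 ↔ (e ∈ τ.1 ↔ Even (p.edges.count e))
  | _, _, .nil _, _ => by simp [liftTau, Walk.edges]
  | _, _, .cons f _ p, τ => by
    rw [liftTau, mem_liftTau he p, mem_tauStep he, Walk.edges]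
    by_cases hfe : f = e
    · subst hfe
      rw [List.count_cons_self, Nat.even_add_one]
      tauto
    · rw [List.count_cons_of_ne hfe]
      tauto

theorem admissible_iff_liftTau {x y : V × {τ : Finset E // τ ⊆ Tᶜ}} (p : G.Walk x.1 y.1) :
    Admissible G T x y p ↔ liftTau p x.2 = y.2 := by
  rw [Subtype.ext_iff, Finset.ext_iff, Admissible]
  refine forall_congr' fun e => ?_
  by_cases he : e ∈ Tᶜ
  · rw [mem_liftTau he, Nat.even_iff]
    by_cases hx : e ∈ x.2.1 <;> by_cases hy : e ∈ y.2.1 <;> simp [he, hx, hy, Finset.mem_symmDiff]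
  · have hy : e ∉ y.2.1 := fun h => he (y.2.2 h)
    have hl : e ∉ (liftTau p x.2).1 := fun h => he ((liftTau p x.2).2 h)
    simp [he, hy, hl]

theorem cover_walk_lengths_eq_admissible_lengths (x y : V × {τ : Finset E // τ ⊆ Tᶜ}) :
    {n | ∃ q : (cover G T).Walk x y, q.length = n} =
      {n | ∃ p : G.Walk x.1 y.1, Admissible G T x y p ∧ p.length = n} := by
  ext n
  constructor
  · rintro ⟨q, rfl⟩
    exact ⟨projWalk q, (admissible_iff_liftTau _).2 (liftTau_projWalk q), length_projWalk q⟩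
  · rintro ⟨p, hp, rfl⟩
    obtain ⟨y₀, τ⟩ := y
    change G.Walk x.1 y₀ at p
    obtain rfl : liftTau p x.2 = τ := (admissible_iff_liftTau (y := (y₀, τ)) p).1 hp
    exact ⟨liftWalk p x.2, length_liftWalk p x.2⟩

end Multigraph

open Multigraph in
theorem graphDist_eq_min_admissible_length_general {V E : Type} [Fintype E] [DecidableEq E]
    (G : Multigraph V E) (T : Finset E) (x y : V × {τ : Finset E // τ ⊆ Tᶜ}) :
    graphDist (cover G T) x y =
      sInf {n : ℕ | ∃ p : G.Walk x.1 y.1, Admissible G T x y p ∧ p.length = n} :=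
  congrArg sInf (cover_walk_lengths_eq_admissible_lengths x y)

open Multigraph in
/-- For a `ℤ/2`-pair `(G̃, G)`, the graph distance in `G̃` between `x` and `y` equals
the minimal length of an `(x,y)`-admissible path in `G`. -/
theorem graphDist_eq_min_admissible_length {V E : Type} [Fintype V] [Fintype E]
    [DecidableEq V] [DecidableEq E] (G : Multigraph V E)
    (hG : G.TwoConnected) (T : Finset E) (hT : G.IsSpanningTree T)
    (x y : V × {τ : Finset E // τ ⊆ Tᶜ}) :
    graphDist (cover G T) x y =
      sInf {n : ℕ | ∃ p : G.Walk x.1 y.1, Admissible G T x y p ∧ p.length = n} :=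
  graphDist_eq_min_admissible_length_general G T x y
end

section
/- Let Γ₀ = F₂, Γ_n = Γ_{n−1}^{(2)} for n ≥ 1, and X_n the Cayley graph of F₂/Γ_n with respect to the images of the canonical generators, so that each X_n (n ≥ 1) is the ℤ/2-homology cover of X_{n−1} and carries the associated wall metric d_{W_n}. Let (X, d_W) be the coarse disjoint union of the (X_n, d_{W_n}) (with d_W(X_n, X_m) = diam_W(X_n) + diam_W(X_m) + n + m for n ≠ m). Then (X, d_W) coarsely embeds into a Hilbert space. -/
open Multigraph

/-- A finite multigraph with decidable equality, bundled. -/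
structure Lv where
  V : Type
  E : Type
  G : Multigraph V E
  fV : Fintype V
  fE : Fintype E
  dV : DecidableEq V
  dE : DecidableEq E

/-- A choice of a spanning tree of `G` (when one exists). -/
noncomputable def chooseTree {V E : Type} [Fintype V] [Fintype E] (G : Multigraph V E) :
    Finset E :=
  letI := Classical.dec (∃ T : Finset E, G.IsSpanningTree T)
  if h : ∃ T : Finset E, G.IsSpanningTree T then h.choose else ∅

/-- The `ℤ/2`-homology cover of a bundled finite multigraph, with respect to the chosen
spanning tree. -/
noncomputable def Lv.next (L : Lv) : Lv :=
  letI := L.fV; letI := L.fE; letI := L.dV; letI := L.dE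
  { V := L.V × {τ : Finset L.E // τ ⊆ (chooseTree L.G)ᶜ}
    E := L.E × {τ : Finset L.E // τ ⊆ (chooseTree L.G)ᶜ}
    G := cover L.G (chooseTree L.G)
    fV := inferInstance
    fE := inferInstance
    dV := inferInstance
    dE := inferInstance }

/-- The "figure eight" graph: one vertex and two (self-loop) edges. -/
def figureEight : Lv :=
  { V := Unit
    E := Fin 2
    G := { src := fun _ => (), tgt := fun _ => () }
    fV := inferInstance
    fE := inferInstance
    dV := inferInstance
    dE := inferInstance }

/-- The tower `X₀ = ` figure eight, `X_{n+1} = ` the `ℤ/2`-homology cover of `X_n`;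
so `X_n` is the Cayley graph of `F₂/Γ_n`. -/
noncomputable def lv : ℕ → Lv := fun n => Nat.rec figureEight (fun _ L => L.next) n

/-- The graph metric `d_{X_n}` on `X_n`. -/
noncomputable def graphDistAt (n : ℕ) : (lv n).V → (lv n).V → ℕ :=
  fun x y => graphDist (lv n).G x y

/-- The wall metric `d_{W_n}` on `X_n`, coming from `X_n` being the
`ℤ/2`-homology cover of `X_{n-1}` (and trivial on the one-point graph `X₀`). -/
noncomputable def wallDistAt : (n : ℕ) → (lv n).V → (lv n).V → ℕ
  | 0 => fun _ _ => 0
  | n + 1 => fun x y =>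
      letI := (lv n).fV; letI := (lv n).fE; letI := (lv n).dV; letI := (lv n).dE
      wallDist (lv n).G (chooseTree (lv n).G) x y

/-- The diameter of `(X_n, d_{X_n})`. -/
noncomputable def diamX (n : ℕ) : ℕ := sSup {k : ℕ | ∃ x y, graphDistAt n x y = k}

/-- The diameter of `(X_n, d_{W_n})`. -/
noncomputable def diamW (n : ℕ) : ℕ := sSup {k : ℕ | ∃ x y, wallDistAt n x y = k}

/-- The box space `X = ⊔ X_n` (as a set). -/
def BoxV : Type := Σ n : ℕ, (lv n).V

/-- The metric `d_X` of the coarse disjoint union `(X, d_X) = ⊔ (X_n, d_{X_n})`. -/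
noncomputable def boxDistX (p q : BoxV) : ℕ :=
  if h : p.1 = q.1 then graphDistAt q.1 (h ▸ p.2) q.2
  else diamX p.1 + diamX q.1 + p.1 + q.1

/-- The metric `d_W` of the coarse disjoint union `(X, d_W) = ⊔ (X_n, d_{W_n})`. -/
noncomputable def boxDistW (p q : BoxV) : ℕ :=
  if h : p.1 = q.1 then wallDistAt q.1 (h ▸ p.2) q.2
  else diamW p.1 + diamW q.1 + p.1 + q.1
section CoarseGeometry

/-- `f` is a coarse embedding of `(X, d)` into the normed space `H`:
for all sequences `(x_n)`, `(y_n)` in `X`, `d(x_n, y_n) → ∞` if and only if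
`‖f(x_n) - f(y_n)‖ → ∞`. -/
def IsCoarseEmbedding {X H : Type} [NormedAddCommGroup H] (d : X → X → ℝ) (f : X → H) :
    Prop :=
  ∀ x y : ℕ → X,
    Filter.Tendsto (fun n => d (x n) (y n)) Filter.atTop Filter.atTop ↔
    Filter.Tendsto (fun n => ‖f (x n) - f (y n)‖) Filter.atTop Filter.atTop

/-- `(X, d)` coarsely embeds into a (real) Hilbert space. -/
def CoarselyEmbeddableIntoHilbert {X : Type} (d : X → X → ℝ) : Prop :=
  ∃ (H : Type) (_ : NormedAddCommGroup H) (_ : InnerProductSpace ℝ H)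
    (_ : CompleteSpace H) (f : X → H), IsCoarseEmbedding d f

/-- Property A for a space `X` with distance function `d`: for every `ε > 0` and
`R > 0` there are a family `(A_x)_{x ∈ X}` of finite nonempty subsets of `X × ℕ` and
`S > 0` such that `|A_x △ A_y| < ε · |A_x ∩ A_y|` whenever `d(x,y) ≤ R`, and
`A_x ⊆ B(x, S) × ℕ` for every `x`. -/
def HasPropertyA {X : Type} (d : X → X → ℝ) : Prop :=
  letI : DecidableEq (X × ℕ) := Classical.decEq _
  ∀ ε : ℝ, 0 < ε → ∀ R : ℝ, 0 < R →
    ∃ (A : X → Finset (X × ℕ)) (S : ℝ), 0 < S ∧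
      (∀ x : X, (A x).Nonempty) ∧
      (∀ x y : X, d x y ≤ R →
        ((symmDiff (A x) (A y)).card : ℝ) < ε * ((A x ∩ A y).card : ℝ)) ∧
      (∀ x : X, ∀ p ∈ A x, d x p.1 ≤ S)

end CoarseGeometry

/-!
Counting the walls that separate two points is a Hamming distance: record, for every wall, which
class of the complement of the wall a point lies in. Sending each class to a vector of length
`1/√2` along its own axis turns Hamming distance into squared Euclidean distance, so every
`(X_n, d_{W_n})` is isometric to a subset of a Euclidean space with the squared metric. Centre the
`n`-th level at a base point, append one coordinate `√(diam_W(X_n) + n)`, and place the levels in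
mutually orthogonal summands of `ℓ²`: then `d_W ≤ ‖F p - F q‖² ≤ 2 d_W` on the whole box space,
and such an `F` is a coarse embedding.
-/

theorem isCoarseEmbedding_of_sq_bounds {X H : Type} [NormedAddCommGroup H]
    {d : X → X → ℝ} {f : X → H} {C : ℝ} (hC : 0 < C)
    (h_lower : ∀ x y, d x y ≤ ‖f x - f y‖ ^ 2) (h_upper : ∀ x y, ‖f x - f y‖ ^ 2 ≤ C * d x y) :
    IsCoarseEmbedding d f := by
  intro x y
  constructor
  · intro hd
    have hsq : Filter.Tendsto (fun n => ‖f (x n) - f (y n)‖ ^ 2) Filter.atTop Filter.atTop :=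
      Filter.tendsto_atTop_mono (fun n => h_lower _ _) hd
    exact (Real.tendsto_sqrt_atTop.comp hsq).congr fun n => Real.sqrt_sq (norm_nonneg _)
  · intro hf
    have hCd : Filter.Tendsto (fun n => C * d (x n) (y n)) Filter.atTop Filter.atTop :=
      Filter.tendsto_atTop_mono (fun n => h_upper _ _)
        ((Filter.tendsto_pow_atTop two_ne_zero).comp hf)
    exact (Filter.tendsto_const_mul_atTop_of_pos hC).mp hCd

theorem lp.norm_single_sub_single_sq {ι : Type*} [DecidableEq ι] {G : ι → Type*}
    [∀ i, NormedAddCommGroup (G i)] [∀ i, InnerProductSpace ℝ (G i)] {i j : ι} (hij : i ≠ j)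
    (a : G i) (b : G j) :
    ‖lp.single 2 i a - lp.single 2 j b‖ ^ 2 = ‖a‖ ^ 2 + ‖b‖ ^ 2 := by
  rw [norm_sub_sq_real, lp.inner_single_left, lp.single_apply_ne 2 j b hij, inner_zero_right,
    lp.norm_single two_pos, lp.norm_single two_pos]
  ring

theorem coarselyEmbeddableIntoHilbert_sigma {X H : ℕ → Type} [∀ n, NormedAddCommGroup (H n)]
    [∀ n, InnerProductSpace ℝ (H n)] [∀ n, CompleteSpace (H n)]
    (d : (Σ n, X n) → (Σ n, X n) → ℝ) (f : ∀ n, X n → H n) (c : ℕ → ℝ)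
    (h_same : ∀ n x y, d ⟨n, x⟩ ⟨n, y⟩ = ‖f n x - f n y‖ ^ 2)
    (h_diam : ∀ n x y, d ⟨n, x⟩ ⟨n, y⟩ ≤ c n)
    (h_diff : ∀ n m x y, n ≠ m → d ⟨n, x⟩ ⟨m, y⟩ = c n + c m) :
    CoarselyEmbeddableIntoHilbert d := by
  -- The base point `⟨x⟩.some` of `X n` does not depend on `x`, by proof irrelevance.
  let g : ∀ n, X n → WithLp 2 (H n × ℝ) := fun n x =>
    WithLp.toLp 2 (f n x - f n (⟨x⟩ : Nonempty (X n)).some, √(c n))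
  have hg_sub : ∀ n x y, ‖g n x - g n y‖ ^ 2 = d ⟨n, x⟩ ⟨n, y⟩ := by
    intro n x y
    simp [g, WithLp.prod_norm_sq_eq_of_L2, h_same]
  have hg : ∀ n x, c n ≤ ‖g n x‖ ^ 2 ∧ ‖g n x‖ ^ 2 ≤ 2 * c n := by
    intro n x
    have hx := h_diam n x (⟨x⟩ : Nonempty (X n)).some
    have hc : 0 ≤ c n := (h_same n x _ ▸ sq_nonneg _).trans hx
    rw [h_same] at hx
    simp only [g, WithLp.prod_norm_sq_eq_of_L2, WithLp.toLp_fst, WithLp.toLp_snd, Real.norm_eq_abs,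
      sq_abs, Real.sq_sqrt hc]
    constructor <;> linarith [sq_nonneg ‖f n x - f n (⟨x⟩ : Nonempty (X n)).some‖]
  let F : (Σ n, X n) → lp (fun n => WithLp 2 (H n × ℝ)) 2 := fun p => lp.single 2 p.1 (g p.1 p.2)
  have hF : ∀ p q, d p q ≤ ‖F p - F q‖ ^ 2 ∧ ‖F p - F q‖ ^ 2 ≤ 2 * d p q := by
    rintro ⟨n, x⟩ ⟨m, y⟩
    rcases eq_or_ne n m with rfl | hnm
    · have : ‖F ⟨n, x⟩ - F ⟨n, y⟩‖ ^ 2 = d ⟨n, x⟩ ⟨n, y⟩ := by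
        rw [← hg_sub, ← lp.single_sub, lp.norm_single two_pos]
      have hd : 0 ≤ d ⟨n, x⟩ ⟨n, y⟩ := this ▸ sq_nonneg _
      constructor <;> linarith
    · rw [lp.norm_single_sub_single_sq hnm, h_diff n m x y hnm]
      constructor <;> linarith [hg n x, hg m y]
  exact ⟨_, inferInstance, inferInstance, inferInstance, F,
    isCoarseEmbedding_of_sq_bounds two_pos (fun p q => (hF p q).1) fun p q => (hF p q).2⟩

section Hamming

variable {ι : Type*} [Fintype ι] {β : ι → Type*} [∀ i, Fintype (β i)] [∀ i, DecidableEq (β i)]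

noncomputable def hammingToEuclidean (x : ∀ i, β i) : EuclideanSpace ℝ (Σ i, β i) :=
  WithLp.toLp 2 fun p => if x p.1 = p.2 then (√2)⁻¹ else 0

theorem norm_hammingToEuclidean_sub_sq (x y : ∀ i, β i) :
    ‖hammingToEuclidean x - hammingToEuclidean y‖ ^ 2 = hammingDist x y := by
  rw [EuclideanSpace.real_norm_sq_eq, Fintype.sum_sigma, hammingDist, Finset.card_filter]
  push_cast
  refine Finset.sum_congr rfl fun i _ => ?_
  by_cases h : x i = y i
  · simp [hammingToEuclidean, h]
  · simp [hammingToEuclidean, h, sub_sq, Finset.sum_add_distrib, ite_mul, mul_ite]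
    norm_num

end Hamming

namespace Multigraph

variable {V E : Type} {G : Multigraph V E}

theorem EndsAt.symm {e : E} {u v : V} (h : G.EndsAt e u v) : G.EndsAt e v u :=
  Or.symm h

theorem reachAvoid_iff_reflTransGen {F : Set E} {u v : V} :
    G.ReachAvoid F u v ↔ Relation.ReflTransGen (fun a b => ∃ e ∉ F, G.EndsAt e a b) u v := by
  constructor
  · rintro ⟨p, hp⟩
    induction p with
    | nil => exact .refl
    | cons e h p ih =>
      exact .head ⟨e, hp e List.mem_cons_self, h⟩ (ih fun f hf => hp f (List.mem_cons_of_mem _ hf))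
  · intro h
    induction h using Relation.ReflTransGen.head_induction_on with
    | refl => exact ⟨.nil _, by simp [Walk.edges]⟩
    | head hab _ ih =>
      obtain ⟨e, heF, he⟩ := hab
      obtain ⟨p, hp⟩ := ih
      refine ⟨.cons e he p, ?_⟩
      simpa [Walk.edges, heF] using hp

theorem reachAvoid_equivalence (F : Set E) : Equivalence (G.ReachAvoid F) := by
  have : Std.Symm fun a b => ∃ e ∉ F, G.EndsAt e a b :=
    ⟨fun _ _ ⟨e, heF, he⟩ => ⟨e, heF, he.symm⟩⟩
  rw [show G.ReachAvoid F = _ from funext₂ fun _ _ => propext reachAvoid_iff_reflTransGen]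
  exact ⟨fun _ => .refl, Std.Symm.symm _ _, .trans⟩

def reachAvoidSetoid (G : Multigraph V E) (F : Set E) : Setoid V :=
  ⟨G.ReachAvoid F, reachAvoid_equivalence F⟩

open scoped Classical in
theorem ncard_separates_eq_hammingDist [Fintype V] {K : Type} [Fintype K] (F : K → Set E)
    (x y : V) :
    {k | G.Separates (F k) x y}.ncard =
      hammingDist (fun k => Quotient.mk (G.reachAvoidSetoid (F k)) x)
        (fun k => Quotient.mk (G.reachAvoidSetoid (F k)) y) := by
  rw [hammingDist, ← Set.ncard_coe_finset]
  congr 1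
  ext k
  simp [Separates, Quotient.eq, reachAvoidSetoid]

end Multigraph

theorem exists_wallDistAt_eq_norm_sub_sq (n : ℕ) :
    ∃ (ι : Type) (_ : Fintype ι) (f : (lv n).V → EuclideanSpace ℝ ι),
      ∀ x y, (wallDistAt n x y : ℝ) = ‖f x - f y‖ ^ 2 := by
  cases n with
  | zero => exact ⟨Empty, inferInstance, 0, fun _ _ => by simp [wallDistAt]⟩
  | succ n =>
    classical
    let := (lv n).fV; let := (lv n).fE; let := (lv n).dE
    let G := (lv n).G
    let T := chooseTree G
    refine ⟨_, inferInstance, fun x => hammingToEuclidean fun e =>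
      Quotient.mk ((cover G T).reachAvoidSetoid (wallOf G T e)) x, fun x y => ?_⟩
    rw [norm_hammingToEuclidean_sub_sq]
    exact congrArg Nat.cast (ncard_separates_eq_hammingDist (G := cover G T) _ x y)

theorem wallDistAt_le_diamW (n : ℕ) (x y : (lv n).V) : wallDistAt n x y ≤ diamW n := by
  let := (lv n).fV
  refine le_csSup (Set.Finite.bddAbove ?_) ⟨x, y, rfl⟩
  refine (Set.finite_range fun p : (lv n).V × (lv n).V => wallDistAt n p.1 p.2).subset ?_
  rintro _ ⟨x, y, rfl⟩
  exact ⟨(x, y), rfl⟩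

/-- The box space `(X, d_W) = ⊔ (X_n, d_{W_n})`, where each `X_n` (`n ≥ 1`) is the
`ℤ/2`-homology cover of `X_{n-1}` equipped with the associated wall metric,
coarsely embeds into a Hilbert space. -/
theorem boxSpace_wall_metric_coarselyEmbeddable :
    CoarselyEmbeddableIntoHilbert (fun p q : BoxV => (boxDistW p q : ℝ)) := by
  choose ι _ f hf using exists_wallDistAt_eq_norm_sub_sq
  refine coarselyEmbeddableIntoHilbert_sigma (X := fun n => (lv n).V) _ f
    (fun n => diamW n + n) (fun n x y => ?_) (fun n x y => ?_) (fun n m x y hnm => ?_)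
  · simp [boxDistW, hf]
  · simp only [boxDistW, dite_true]
    exact_mod_cast (wallDistAt_le_diamW n x y).trans (Nat.le_add_right _ _)
  · simp only [boxDistW, dif_neg hnm]
    push_cast
    ring
end
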